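/- arXiv:1412.2516 — 2 statements merged into one kernel-verified Lean document; each statement's English description precedes it below -/
import Mathlib

section
/- Let φ : U(m) → U(N) be a unitary group homomorphism with the property that whenever M is unitary with eigenvalues λ₁, …, λ_m (with multiplicity), the eigenvalues of φ(M) are exactly the products λ₁^{s₁}⋯λ_m^{s_m} over all tuples (s₁,…,s_m) of nonnegative integers summing to n. Then for any unitaries U, Ũ, one has ‖φ(Ũ) - φ(U)‖_op ≤ n · ‖Ũ - U‖_op. -/
open Polynomial

/-- The L2 operator (spectral) norm of a complex matrix. -/
noncomputable def opNorm {ι : Type*} [Fintype ι] [DecidableEq ι]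
    (M : Matrix ι ι ℂ) : ℝ :=
  ‖LinearMap.toContinuousLinearMap (Matrix.toEuclideanLin M)‖

open scoped Matrix.Norms.L2Operator

lemma opNorm_eq {ι : Type*} [Fintype ι] [DecidableEq ι] (M : Matrix ι ι ℂ) :
    opNorm M = ‖M‖ := rfl

noncomputable instance matCStar {ι : Type*} [Fintype ι] [DecidableEq ι] :
    CStarAlgebra (Matrix ι ι ℂ) := { }

lemma aux_spec {ι : Type*} [Fintype ι] [DecidableEq ι] (M : Matrix ι ι ℂ) (z : ℂ) :
    z ∈ spectrum ℂ M ↔ (Matrix.charpoly M).eval z = 0 := by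
  have halg : algebraMap ℂ (Matrix ι ι ℂ) z = Matrix.scalar ι z := by
    ext i j
    simp [Matrix.algebraMap_matrix_apply, Matrix.scalar_apply, Matrix.diagonal]
  rw [spectrum.mem_iff, Matrix.charpoly, eval_det, Matrix.matPolyEquiv_charmatrix]
  rw [eval_sub, eval_X, eval_C, halg]
  rw [Matrix.isUnit_iff_isUnit_det, isUnit_iff_ne_zero, not_not]

lemma aux_prod_sub_one (s : Multiset ℂ) (h : ∀ a ∈ s, ‖a‖ = 1) :
    ‖s.prod - 1‖ ≤ (s.map (fun a => ‖a - 1‖)).sum := by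
  induction s using Multiset.induction with
  | empty => simp
  | cons a t ih =>
    have ha : ‖a‖ = 1 := h a (Multiset.mem_cons_self a t)
    have ht := ih (fun b hb => h b (Multiset.mem_cons_of_mem hb))
    have key : a * t.prod - 1 = a * (t.prod - 1) + (a - 1) := by ring
    simp only [Multiset.prod_cons, Multiset.map_cons, Multiset.sum_cons, key]
    calc ‖a * (t.prod - 1) + (a - 1)‖ ≤ ‖a * (t.prod - 1)‖ + ‖a - 1‖ := norm_add_le _ _
      _ = ‖t.prod - 1‖ + ‖a - 1‖ := by rw [norm_mul, ha, one_mul]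
      _ ≤ _ := by linarith

lemma aux_eigs {k : ℕ} (M : Matrix (Fin k) (Fin k) ℂ) :
    ∃ lam : Fin k → ℂ, Matrix.charpoly M = ∏ i, (X - C (lam i)) ∧
      ∀ i, lam i ∈ spectrum ℂ M := by
  classical
  set p := Matrix.charpoly M with hp
  have hmonic : p.Monic := Matrix.charpoly_monic M
  have hdeg : p.natDegree = k := by
    rw [hp, Matrix.charpoly_natDegree_eq_dim, Fintype.card_fin]
  have hsplit : p.Splits := IsAlgClosed.splits p
  have hcard : p.roots.card = k := by
    rw [(Polynomial.splits_iff_card_roots).mp hsplit, hdeg]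
  set l := p.roots.toList with hl
  have hlen : l.length = k := by rw [hl, Multiset.length_toList, hcard]
  refine ⟨fun i => l.get (Fin.cast hlen.symm i), ?_, ?_⟩
  · have h1 : p = (p.roots.map fun a => X - C a).prod := by
      conv_lhs => rw [hsplit.eq_prod_roots]
      rw [hmonic.leadingCoeff, map_one, one_mul]
    have h2 : p.roots = (l : Multiset ℂ) := (Multiset.coe_toList _).symm
    rw [h1, h2]
    rw [Multiset.map_coe, Multiset.prod_coe]
    have h3 : ∏ i : Fin k, (X - C (l.get (Fin.cast hlen.symm i)))
        = ∏ j : Fin l.length, (X - C (l.get j)) :=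
      Equiv.prod_comp (finCongr hlen.symm) (fun j => X - C (l.get j))
    have h4 : (l.map (fun a => X - C a)).prod = ∏ j : Fin l.length, (X - C (l.get j)) := by
      conv_lhs => rw [← List.ofFn_get l, List.map_ofFn]
      rw [List.prod_ofFn]
      rfl
    rw [h4, h3]
  · intro i
    have : l.get (Fin.cast hlen.symm i) ∈ p.roots :=
      Multiset.mem_toList.mp (l.get_mem _)
    exact (aux_spec M _).mpr (Polynomial.isRoot_of_mem_roots this)

/-- Let `φ : U(m) → U(N)` be a unitary group homomorphism (here `N = C(m+n-1, n)` is the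
number of occupation tuples, realized as `Sym (Fin m) n`) such that whenever a unitary `M`
has eigenvalues `λ₁, …, λ_m` with multiplicity, the eigenvalues of `φ(M)` are exactly the
products `λ₁^{s₁}⋯λ_m^{s_m}` over all occupation tuples `(s₁,…,s_m)` summing to `n` (stated
via factorizations of characteristic polynomials).  Then for all unitaries `U, Ũ`,
`‖φ(Ũ) - φ(U)‖_op ≤ n ‖Ũ - U‖_op`. -/
theorem stmt4 {m n : ℕ} (hn : 1 ≤ n)
    (φ : Matrix.unitaryGroup (Fin m) ℂ →* Matrix.unitaryGroup (Sym (Fin m) n) ℂ)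
    (heig : ∀ (M : Matrix.unitaryGroup (Fin m) ℂ) (lam : Fin m → ℂ),
      Matrix.charpoly (M : Matrix (Fin m) (Fin m) ℂ) = ∏ i, (X - C (lam i)) →
      Matrix.charpoly ((φ M : Matrix (Sym (Fin m) n) (Sym (Fin m) n) ℂ)) =
        ∏ σ : Sym (Fin m) n, (X - C ((σ.1.map lam).prod)))
    (U Ut : Matrix.unitaryGroup (Fin m) ℂ) :
    opNorm ((φ Ut : Matrix (Sym (Fin m) n) (Sym (Fin m) n) ℂ) - (φ U : Matrix (Sym (Fin m) n) (Sym (Fin m) n) ℂ)) ≤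
      n * opNorm ((Ut : Matrix (Fin m) (Fin m) ℂ) - (U : Matrix (Fin m) (Fin m) ℂ)) := by
  classical
  rcases isEmpty_or_nonempty (Sym (Fin m) n) with hS | hS
  · have h0 : (φ Ut : Matrix (Sym (Fin m) n) (Sym (Fin m) n) ℂ)
        - (φ U : Matrix (Sym (Fin m) n) (Sym (Fin m) n) ℂ) = 0 := Subsingleton.elim _ _
    rw [h0, opNorm_eq, norm_zero]
    exact mul_nonneg (Nat.cast_nonneg n) (by rw [opNorm_eq]; exact norm_nonneg _)
  · obtain ⟨σ0⟩ := hS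
    have hm : Nonempty (Fin m) := by
      obtain ⟨a, -⟩ := Multiset.card_pos_iff_exists_mem.mp
        (show 0 < Multiset.card σ0.1 by rw [σ0.2]; omega)
      exact ⟨a⟩
    obtain ⟨i0⟩ := hm
    haveI : Nontrivial (Matrix (Fin m) (Fin m) ℂ) :=
      ⟨0, 1, fun h => by simpa using congrFun (congrFun h i0) i0⟩
    haveI : Nontrivial (Matrix (Sym (Fin m) n) (Sym (Fin m) n) ℂ) :=
      ⟨0, 1, fun h => by simpa using congrFun (congrFun h σ0) σ0⟩
    set V : Matrix.unitaryGroup (Fin m) ℂ := Ut * U⁻¹ with hV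
    have hVU : V * U = Ut := by rw [hV, inv_mul_cancel_right]
    obtain ⟨lam, hlam, hspec⟩ := aux_eigs (V : Matrix (Fin m) (Fin m) ℂ)
    have hlam1 : ∀ i, ‖lam i‖ = 1 := fun i => by
      have := spectrum.subset_circle_of_unitary V.2 (hspec i)
      simpa [mem_sphere_zero_iff_norm] using this
    have hbound : ∀ i, ‖lam i - 1‖ ≤ ‖(V : Matrix (Fin m) (Fin m) ℂ) - 1‖ := by
      intro i
      have hmem : lam i - 1 ∈ spectrum ℂ
          ((V : Matrix (Fin m) (Fin m) ℂ) - algebraMap ℂ (Matrix (Fin m) (Fin m) ℂ) 1) := by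
        rw [← spectrum.sub_singleton_eq]
        exact Set.sub_mem_sub (hspec i) rfl
      have := spectrum.norm_le_norm_of_mem hmem
      simpa using this
    set c := ‖(V : Matrix (Fin m) (Fin m) ℂ) - 1‖ with hc
    have hc0 : (0:ℝ) ≤ c := norm_nonneg _
    have hch := heig V lam hlam
    set W := (φ V : Matrix (Sym (Fin m) n) (Sym (Fin m) n) ℂ) with hW
    have hWspec : ∀ x ∈ spectrum ℂ W, ‖x - 1‖ ≤ (n:ℝ) * c := by
      intro x hx
      rw [aux_spec, hch, Polynomial.eval_prod] at hx
      obtain ⟨σ, -, hσ⟩ := Finset.prod_eq_zero_iff.mp hx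
      have hxeq : x = (σ.1.map lam).prod := by
        have : x - (σ.1.map lam).prod = 0 := by simpa using hσ
        linear_combination this
      rw [hxeq]
      calc ‖(σ.1.map lam).prod - 1‖ ≤ ((σ.1.map lam).map (fun a => ‖a - 1‖)).sum :=
            aux_prod_sub_one _ (by
              intro a ha
              obtain ⟨i, -, rfl⟩ := Multiset.mem_map.mp ha
              exact hlam1 i)
        _ ≤ Multiset.card ((σ.1.map lam).map (fun a => ‖a - 1‖)) • c := by
            refine Multiset.sum_le_card_nsmul _ _ ?_
            intro x hx
            obtain ⟨a, ha, rfl⟩ := Multiset.mem_map.mp hx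
            obtain ⟨i, -, rfl⟩ := Multiset.mem_map.mp ha
            exact hbound i
        _ = (n:ℝ) * c := by
            rw [Multiset.card_map, Multiset.card_map, σ.2, nsmul_eq_mul]
    haveI hWnormal : IsStarNormal W := by
      constructor
      have h1 := (Unitary.mem_iff.mp (φ V).2).1
      have h2 := (Unitary.mem_iff.mp (φ V).2).2
      rw [Commute, SemiconjBy]
      rw [show star ((φ V : Matrix (Sym (Fin m) n) (Sym (Fin m) n) ℂ)) * (φ V : Matrix (Sym (Fin m) n) (Sym (Fin m) n) ℂ) = 1 from h1]
      rw [show ((φ V : Matrix (Sym (Fin m) n) (Sym (Fin m) n) ℂ)) * star (φ V : Matrix (Sym (Fin m) n) (Sym (Fin m) n) ℂ) = 1 from h2]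
    have hcfc : W - 1 = cfc (fun z : ℂ => z - 1) W := by
      rw [cfc_sub (fun z : ℂ => z) (fun _ : ℂ => (1:ℂ)) W, cfc_id' ℂ W, cfc_const_one ℂ W]
    have hWnorm : ‖W - 1‖ ≤ (n:ℝ) * c := by
      rw [hcfc]
      exact norm_cfc_le (by positivity) hWspec
    have e1 : (φ Ut : Matrix (Sym (Fin m) n) (Sym (Fin m) n) ℂ)
        - (φ U : Matrix (Sym (Fin m) n) (Sym (Fin m) n) ℂ)
        = (W - 1) * (φ U : Matrix (Sym (Fin m) n) (Sym (Fin m) n) ℂ) := by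
      rw [sub_mul, one_mul, hW]
      have h : φ V * φ U = φ Ut := by rw [← MonoidHom.map_mul, hVU]
      have := congrArg (Subtype.val) h
      simp only [Submonoid.coe_mul] at this
      rw [this]
    have e2 : (Ut : Matrix (Fin m) (Fin m) ℂ) - (U : Matrix (Fin m) (Fin m) ℂ)
        = ((V : Matrix (Fin m) (Fin m) ℂ) - 1) * (U : Matrix (Fin m) (Fin m) ℂ) := by
      rw [sub_mul, one_mul]
      have := congrArg (Subtype.val) hVU
      simp only [Submonoid.coe_mul] at this
      rw [this]
    rw [opNorm_eq, opNorm_eq, e1, e2,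
      CStarRing.norm_mul_coe_unitary _ (φ U), CStarRing.norm_mul_coe_unitary _ U]
    exact hWnorm
end

section
/- For unitary U and Ũ acting on ℂ^m with eigenvalues of ŨU⁻¹ equal to λ₁,…,λ_m, and for any occupation tuple S = (s₁,…,s_m) of nonnegative integers summing to n, the eigenvalue λ^S = Πᵢ λᵢ^{sᵢ} of Sym^n(Ũ)Sym^n(U)⁻¹ satisfies |λ^S - 1| ≤ n‖Ũ - U‖_op. -/
open Polynomial

lemma aux_pow_sub_one {z : ℂ} (hz : ‖z‖ ≤ 1) (k : ℕ) :
    ‖z ^ k - 1‖ ≤ k * ‖z - 1‖ := by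
  induction k with
  | zero => simp
  | succ k ih =>
    have : z ^ (k + 1) - 1 = z ^ k * (z - 1) + (z ^ k - 1) := by ring
    rw [this]
    calc ‖z ^ k * (z - 1) + (z ^ k - 1)‖
        ≤ ‖z ^ k * (z - 1)‖ + ‖z ^ k - 1‖ := norm_add_le _ _
      _ ≤ 1 * ‖z - 1‖ + k * ‖z - 1‖ := by
          have h1 : ‖z ^ k * (z - 1)‖ ≤ 1 * ‖z - 1‖ := by
            rw [norm_mul, norm_pow]
            exact mul_le_mul_of_nonneg_right (pow_le_one₀ (norm_nonneg z) hz)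
              (norm_nonneg _)
          linarith
      _ = (k + 1 : ℕ) * ‖z - 1‖ := by push_cast; ring

lemma aux_prod_sub_one_s14 {ι : Type*} (t : Finset ι) (f : ι → ℂ)
    (h : ∀ i ∈ t, ‖f i‖ ≤ 1) :
    ‖∏ i ∈ t, f i - 1‖ ≤ ∑ i ∈ t, ‖f i - 1‖ := by
  classical
  induction t using Finset.induction with
  | empty => simp
  | @insert a t' hat ih =>
    rw [Finset.prod_insert hat, Finset.sum_insert hat]
    have key : f a * ∏ i ∈ t', f i - 1 = f a * (∏ i ∈ t', f i - 1) + (f a - 1) := by ring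
    rw [key]
    calc ‖f a * (∏ i ∈ t', f i - 1) + (f a - 1)‖
        ≤ ‖f a * (∏ i ∈ t', f i - 1)‖ + ‖f a - 1‖ :=
          norm_add_le _ _
      _ ≤ 1 * ‖∏ i ∈ t', f i - 1‖ + ‖f a - 1‖ := by
          have h1 : ‖f a * (∏ i ∈ t', f i - 1)‖ ≤
              1 * ‖∏ i ∈ t', f i - 1‖ := by
            rw [norm_mul]
            exact mul_le_mul_of_nonneg_right (h a (Finset.mem_insert_self a t'))
              (norm_nonneg _)
          linarith
      _ ≤ ‖f a - 1‖ + ∑ i ∈ t', ‖f i - 1‖ := by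
          rw [one_mul]
          have := ih (fun i hi => h i (Finset.mem_insert_of_mem hi))
          linarith
      _ = _ := by ring

lemma aux_mem_spectrum_of_root {m : ℕ} (M : Matrix (Fin m) (Fin m) ℂ) {μ : ℂ}
    (h : M.charpoly.IsRoot μ) : μ ∈ spectrum ℂ M := by
  rw [spectrum.mem_iff]
  intro hu
  rw [Matrix.isUnit_iff_isUnit_det] at hu
  have hmap : (Matrix.charmatrix M).map (Polynomial.eval μ) =
      algebraMap ℂ (Matrix (Fin m) (Fin m) ℂ) μ - M := by
    ext i j
    by_cases hij : i = j <;>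
      simp [hij, Matrix.charmatrix_apply, Matrix.algebraMap_matrix_apply, Matrix.one_apply]
  have hdet : (algebraMap ℂ (Matrix (Fin m) (Fin m) ℂ) μ - M).det = 0 := by
    have h2 := RingHom.map_det (Polynomial.evalRingHom μ) (Matrix.charmatrix M)
    rw [RingHom.mapMatrix_apply, Polynomial.coe_evalRingHom] at h2
    rw [← hmap, ← h2]
    simpa [Matrix.charpoly] using h
  rw [hdet] at hu
  exact hu.ne_zero rfl

/-- For unitaries `U, Ũ` on `ℂ^m` with the eigenvalues of `ŨU⁻¹` equal to `λ₁,…,λ_m`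
(with multiplicity, as witnessed by the characteristic polynomial), and any occupation tuple
`S = (s₁,…,s_m)` of nonnegative integers summing to `n`, the corresponding eigenvalue
`λ^S = Πᵢ λᵢ^{sᵢ}` of `Sym^n(Ũ) Sym^n(U)⁻¹` satisfies `|λ^S - 1| ≤ n‖Ũ - U‖_op`. -/
theorem stmt14 {m n : ℕ} (U Ut : Matrix (Fin m) (Fin m) ℂ)
    (hU : U ∈ Matrix.unitaryGroup (Fin m) ℂ) (hUt : Ut ∈ Matrix.unitaryGroup (Fin m) ℂ)
    (lam : Fin m → ℂ)
    (hlam : (Ut * U⁻¹).charpoly = ∏ i, (X - C (lam i)))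
    (s : Fin m → ℕ) (hs : ∑ i, s i = n) :
    ‖∏ i, lam i ^ s i - 1‖ ≤ n * opNorm (Ut - U) := by
  rcases Nat.eq_zero_or_pos m with hm | hm
  · subst hm
    have hn : n = 0 := by simpa using hs.symm
    simp [hn]
  -- setup
  haveI : Nontrivial (EuclideanSpace ℂ (Fin m)) := by
    haveI : Nonempty (Fin m) := ⟨⟨0, hm⟩⟩
    infer_instance
  set M := Ut * U⁻¹ with hM
  have hUinv : U⁻¹ = star U := Matrix.inv_eq_left_inv hU.1
  have hMu : M ∈ Matrix.unitaryGroup (Fin m) ℂ := by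
    rw [hM, hUinv]
    exact mul_mem hUt (Unitary.star_mem hU)
  set φ := (Matrix.toEuclideanCLM (n := Fin m) (𝕜 := ℂ))
  have hφnorm : ∀ A : Matrix (Fin m) (Fin m) ℂ, opNorm A = ‖φ A‖ := by
    intro A
    have : LinearMap.toContinuousLinearMap (Matrix.toEuclideanLin A) = φ A :=
      ContinuousLinearMap.coe_injective
        (Matrix.coe_toEuclideanCLM_eq_toEuclideanLin A).symm
    rw [opNorm, this]
  -- φ M is unitary
  have hφM : φ M ∈ unitary (EuclideanSpace ℂ (Fin m) →L[ℂ] EuclideanSpace ℂ (Fin m)) := by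
    constructor
    · rw [← map_star, ← map_mul, hMu.1, map_one]
    · rw [← map_star, ← map_mul, hMu.2, map_one]
  have hφU : φ U ∈ unitary (EuclideanSpace ℂ (Fin m) →L[ℂ] EuclideanSpace ℂ (Fin m)) := by
    constructor
    · rw [← map_star, ← map_mul, hU.1, map_one]
    · rw [← map_star, ← map_mul, hU.2, map_one]
  -- norm identity : ‖φ M - 1‖ = opNorm (Ut - U)
  have hfact : φ M - 1 = φ (Ut - U) * star (φ U) := by
    have h1 : φ U * star (φ U) = 1 := hφU.2
    rw [map_sub, sub_mul, ← h1]
    congr 1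
    rw [← map_star, ← map_mul, hM, hUinv]
  have hnormeq : ‖φ M - 1‖ = opNorm (Ut - U) := by
    rw [hfact, CStarRing.norm_mul_mem_unitary _ (Unitary.star_mem hφU), hφnorm]
  -- eigenvalue bounds
  set B := opNorm (Ut - U) with hB
  have key : ∀ i : Fin m, ‖lam i‖ ≤ 1 ∧ ‖lam i - 1‖ ≤ B := by
    intro i
    have hroot : M.charpoly.IsRoot (lam i) := by
      rw [hlam, Polynomial.IsRoot, Polynomial.eval_prod]
      refine Finset.prod_eq_zero (Finset.mem_univ i) ?_
      simp
    have hspec : lam i ∈ spectrum ℂ M := aux_mem_spectrum_of_root M hroot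
    have hspecφ : lam i ∈ spectrum ℂ (φ M) := by
      rwa [AlgEquiv.spectrum_eq φ M]
    constructor
    · have h1 : ‖lam i‖ ≤ ‖φ M‖ := spectrum.norm_le_norm_of_mem hspecφ
      rwa [CStarRing.norm_of_mem_unitary hφM] at h1
    · have hsub : lam i - 1 ∈ spectrum ℂ (φ M - 1) := by
        have h3 := spectrum.sub_singleton_eq (φ M) (1 : ℂ)
        rw [map_one] at h3
        rw [← h3]
        exact Set.sub_mem_sub hspecφ rfl
      have h2 : ‖lam i - 1‖ ≤ ‖φ M - 1‖ := spectrum.norm_le_norm_of_mem hsub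
      rwa [hnormeq] at h2
  have hBnn : 0 ≤ B := by
    rw [hB, hφnorm]; exact norm_nonneg _
  calc ‖∏ i, lam i ^ s i - 1‖
      ≤ ∑ i, ‖lam i ^ s i - 1‖ := by
        apply aux_prod_sub_one_s14
        intro i _
        rw [norm_pow]
        exact pow_le_one₀ (norm_nonneg _) (key i).1
    _ ≤ ∑ i, (s i : ℝ) * ‖lam i - 1‖ := by
        apply Finset.sum_le_sum
        intro i _
        exact aux_pow_sub_one (key i).1 (s i)
    _ ≤ ∑ i, (s i : ℝ) * B := by
        apply Finset.sum_le_sum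
        intro i _
        exact mul_le_mul_of_nonneg_left (key i).2 (Nat.cast_nonneg _)
    _ = n * B := by
        rw [← Finset.sum_mul, ← hs]
        push_cast
        ring
end
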